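/- arXiv:1901.07405 — 4 statements merged into one kernel-verified Lean document; each statement's English description precedes it below -/
import Mathlib

section
/- Let P be a probability measure on R^{d_s} × R^{d_f} and let Q̄ be the minimizer of the Kullback-Leibler divergence D(Q‖P) over probability measures Q with E_Q[Π^s] = μ̄^s. If Q̄^s is the corresponding minimizer for the slow marginal P^s with the same constraint, then the Radon-Nikodym derivatives satisfy (dQ̄/dP)(y,z) = (dQ̄^s/dP^s)(y) for all y ∈ R^{d_s}, z ∈ R^{d_f}. -/
open MeasureTheory Matrix Real

/-- The log-partition function `A(λ, P) = log E_P[exp(λ · Π^s)]` of a measure on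
`ℝ^{d_s} × ℝ^{d_f}`, with `Π^s` the slow projection. -/
noncomputable def logPartition {ds df : ℕ}
    (P : Measure ((Fin ds → ℝ) × (Fin df → ℝ))) (l : Fin ds → ℝ) : ℝ :=
  Real.log (∫ x, Real.exp (l ⬝ᵥ x.1) ∂P)

/-- The log-partition function of a measure on the slow space `ℝ^{d_s}`. -/
noncomputable def logPartitionSlow {ds : ℕ}
    (Ps : Measure (Fin ds → ℝ)) (l : Fin ds → ℝ) : ℝ :=
  Real.log (∫ y, Real.exp (l ⬝ᵥ y) ∂Ps)

/-- Let `P` be a probability measure on `ℝ^{d_s} × ℝ^{d_f}` and `Q̄` the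
KL-minimizer over measures with slow mean `μ̄^s`, which (by assumption) has the
exponential-family form `dQ̄/dP (x) = exp(λ̄ · Π^s x − A(λ̄, P))` with the Lagrange
multiplier `λ̄` uniquely determined by `∇_λ A(λ̄, P) = μ̄^s`; similarly `Q̄^s` is the
minimizer for the slow marginal `P^s = P.map Prod.fst`, with multiplier `λ̄s` uniquely
determined by `∇_λ A(λ̄s, P^s) = μ̄^s`. Then the Radon–Nikodym derivatives satisfy
`(dQ̄/dP)(y,z) = (dQ̄^s/dP^s)(y)` for all `y, z`. -/
theorem matching_density_eq_marginal_matching_density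
    (ds df : ℕ) (P : Measure ((Fin ds → ℝ) × (Fin df → ℝ))) [IsProbabilityMeasure P]
    (μs : Fin ds → ℝ) (lam lams : Fin ds → ℝ)
    (Qbar : Measure ((Fin ds → ℝ) × (Fin df → ℝ))) (Qbars : Measure (Fin ds → ℝ))
    -- exponential-family form of the minimizers
    (hQ : Qbar = P.withDensity
      (fun x => ENNReal.ofReal (Real.exp (lam ⬝ᵥ x.1 - logPartition P lam))))
    (hQs : Qbars = (P.map Prod.fst).withDensity
      (fun y => ENNReal.ofReal (Real.exp (lams ⬝ᵥ y - logPartitionSlow (P.map Prod.fst) lams))))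
    -- the Lagrange multiplier λ̄ satisfies ∇_λ A(λ̄, P) = μ̄^s and is the unique such vector
    (hgrad : ∀ v, fderiv ℝ (logPartition P) lam v = μs ⬝ᵥ v)
    (huniq : ∀ l, (∀ v, fderiv ℝ (logPartition P) l v = μs ⬝ᵥ v) → l = lam)
    -- the Lagrange multiplier λ̄s satisfies ∇_λ A(λ̄s, P^s) = μ̄^s and is the unique such vector
    (hgrads : ∀ v, fderiv ℝ (logPartitionSlow (P.map Prod.fst)) lams v = μs ⬝ᵥ v)
    (huniqs : ∀ l, (∀ v, fderiv ℝ (logPartitionSlow (P.map Prod.fst)) l v = μs ⬝ᵥ v) → l = lams) :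
    ∀ y z, Real.exp (lam ⬝ᵥ y - logPartition P lam)
      = Real.exp (lams ⬝ᵥ y - logPartitionSlow (P.map Prod.fst) lams) ∧
      (fun x : (Fin ds → ℝ) × (Fin df → ℝ) =>
        ENNReal.ofReal (Real.exp (lam ⬝ᵥ x.1 - logPartition P lam))) (y, z)
      = (fun y => ENNReal.ofReal
          (Real.exp (lams ⬝ᵥ y - logPartitionSlow (P.map Prod.fst) lams))) y := by
  have hfun : logPartitionSlow (P.map Prod.fst) = logPartition P := by
    funext l
    unfold logPartition logPartitionSlow
    congr 1
    rw [integral_map measurable_fst.aemeasurable]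
    have hc : Continuous fun y : Fin ds → ℝ => l ⬝ᵥ y := by
      simp only [dotProduct]
      exact continuous_finset_sum Finset.univ fun i _ => continuous_const.mul (continuous_apply i)
    exact (Real.continuous_exp.comp hc).aestronglyMeasurable
  have hlam : lam = lams := by
    apply huniqs
    intro v
    rw [hfun]
    exact hgrad v
  intro y z
  rw [hfun, hlam]
  exact ⟨rfl, rfl⟩
end

section
/- Let Λ : R^d → R be continuously differentiable with Λ(rθ) ~ w(θ) r² as r → +∞ for every θ ∈ R^d (for some function w), and suppose sup_{θ≠0} ‖∇Λ(θ)‖/‖θ‖ < ∞. Then for every θ, θ₀ ∈ R^d, Λ(rθ + θ₀) ~ w(θ) r² as r → +∞. -/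
open Filter Real

/-! By continuity the gradient bound `‖∇Λ(x)‖ ≤ C‖x‖` also holds at `x = 0`, so on the ball of
radius `r‖θ‖ + ‖θ₀‖` the gradient is `O(r)`. The mean value inequality then gives
`Λ(rθ + θ₀) - Λ(rθ) = O(r) = o(r²)`, and the shifted limit equals the unshifted one. -/

open Asymptotics Topology Metric

section

variable {E F : Type*} [NormedAddCommGroup E] [NormedSpace ℝ E] [NormedAddCommGroup F]
  [NormedSpace ℝ F]

lemma norm_le_mul_norm_of_forall_ne_zero {φ : E → E →L[ℝ] F} (hφ : Continuous φ) {C : ℝ}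
    (h : ∀ x, x ≠ 0 → ‖φ x‖ ≤ C * ‖x‖) (x : E) : ‖φ x‖ ≤ C * ‖x‖ := by
  rcases subsingleton_or_nontrivial E with hE | hE
  · simp [Subsingleton.elim x 0]
  have hclosed : IsClosed {x | ‖φ x‖ ≤ C * ‖x‖} :=
    isClosed_le hφ.norm (continuous_const.mul continuous_norm)
  exact hclosed.closure_subset_iff.mpr h ((dense_compl_singleton (0 : E)).closure_eq ▸ trivial)

lemma norm_sub_le_of_norm_fderiv_le_mul_norm {f : E → F} (hf : Differentiable ℝ f) {C : ℝ}
    (hC : 0 ≤ C) (h : ∀ x, ‖fderiv ℝ f x‖ ≤ C * ‖x‖) (x y : E) :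
    ‖f (x + y) - f x‖ ≤ C * (‖x‖ + ‖y‖) * ‖y‖ := by
  have hx : x ∈ closedBall (0 : E) (‖x‖ + ‖y‖) := by simp
  have hxy : x + y ∈ closedBall (0 : E) (‖x‖ + ‖y‖) := by
    simpa using norm_add_le x y
  have hbound : ∀ z ∈ closedBall (0 : E) (‖x‖ + ‖y‖), ‖fderiv ℝ f z‖ ≤ C * (‖x‖ + ‖y‖) :=
    fun z hz ↦ (h z).trans (mul_le_mul_of_nonneg_left (by simpa using hz) hC)
  simpa using (convex_closedBall _ _).norm_image_sub_le_of_norm_fderiv_le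
    (fun z _ ↦ hf z) hbound hx hxy

lemma isBigO_shift_sub_of_norm_fderiv_le_mul_norm {f : E → F} (hf : Differentiable ℝ f) {C : ℝ}
    (hC : 0 ≤ C) (h : ∀ x, ‖fderiv ℝ f x‖ ≤ C * ‖x‖) (θ θ₀ : E) :
    (fun r : ℝ ↦ f (r • θ + θ₀) - f (r • θ)) =O[atTop] fun r ↦ r := by
  refine IsBigO.of_bound (C * (‖θ‖ + ‖θ₀‖) * ‖θ₀‖) ?_
  filter_upwards [eventually_ge_atTop 1] with r hr
  calc ‖f (r • θ + θ₀) - f (r • θ)‖ ≤ C * (|r| * ‖θ‖ + ‖θ₀‖) * ‖θ₀‖ := by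
        simpa [norm_smul] using norm_sub_le_of_norm_fderiv_le_mul_norm hf hC h (r • θ) θ₀
    _ ≤ C * (‖θ‖ + ‖θ₀‖) * ‖θ₀‖ * ‖r‖ := by
        rw [Real.norm_eq_abs, abs_of_nonneg (by linarith)]
        have : ‖θ₀‖ ≤ r * ‖θ₀‖ := le_mul_of_one_le_left (norm_nonneg _) hr
        have := mul_nonneg hC (norm_nonneg θ₀)
        nlinarith

end

lemma norm_gradient_eq_norm_fderiv {E : Type*} [NormedAddCommGroup E] [InnerProductSpace ℝ E]
    [CompleteSpace E] (f : E → ℝ) (x : E) : ‖gradient f x‖ = ‖fderiv ℝ f x‖ :=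
  (InnerProductSpace.toDual ℝ E).symm.norm_map _

/-- Let `Λ : ℝ^d → ℝ` be continuously differentiable with
`Λ(rθ) ~ w(θ) r²` as `r → +∞` for every `θ` and with `‖∇Λ(θ)‖ ≤ C‖θ‖` uniformly.
Then for every `θ, θ₀`, `Λ(rθ + θ₀) ~ w(θ) r²` as `r → +∞`
(in the sense that `Λ(rθ + θ₀)/r² → w(θ)`). -/
theorem cgf_asymptotically_quadratic_shift
    (d : ℕ) (Λ : EuclideanSpace ℝ (Fin d) → ℝ) (w : EuclideanSpace ℝ (Fin d) → ℝ)
    (hC1 : ContDiff ℝ 1 Λ)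
    (hasym : ∀ θ, Tendsto (fun r : ℝ => Λ (r • θ) / r ^ 2) atTop (nhds (w θ)))
    (hgrad : ∃ C : ℝ, ∀ θ : EuclideanSpace ℝ (Fin d), θ ≠ 0 →
      ‖gradient Λ θ‖ ≤ C * ‖θ‖) :
    ∀ θ θ₀ : EuclideanSpace ℝ (Fin d),
      Tendsto (fun r : ℝ => Λ (r • θ + θ₀) / r ^ 2) atTop (nhds (w θ)) := by
  intro θ θ₀
  obtain ⟨C, hC⟩ := hgrad
  have hfderiv (x) : ‖fderiv ℝ Λ x‖ ≤ max C 0 * ‖x‖ := by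
    refine norm_le_mul_norm_of_forall_ne_zero (hC1.continuous_fderiv one_ne_zero) (fun x hx ↦ ?_) x
    rw [← norm_gradient_eq_norm_fderiv]
    exact (hC x hx).trans (mul_le_mul_of_nonneg_right (le_max_left _ _) (norm_nonneg _))
  have hshift : Tendsto (fun r : ℝ ↦ (Λ (r • θ + θ₀) - Λ (r • θ)) / r ^ 2) atTop (𝓝 0) :=
    ((isBigO_shift_sub_of_norm_fderiv_le_mul_norm (hC1.differentiable one_ne_zero)
      (le_max_right _ _) hfderiv θ θ₀).trans_isLittleO
      (by simpa using isLittleO_pow_pow_atTop_of_lt (𝕜 := ℝ) one_lt_two)).tendsto_div_nhds_zero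
  rw [← add_zero (w θ)]
  refine ((hasym θ).add hshift).congr fun r ↦ ?_
  ring
end

section
/- Let the slow-fast drift matrix be A = [[A^s, V],[W, A^f]] in block form and suppose one micro–macro acceleration step with one Euler–Maruyama inner step of size δt and extrapolation step Δt is applied to a Gaussian law with mean (μ^s, μ^f) and covariance Σ with blocks Σ^s, C, Cᵀ, Σ^f. Then the mean after one step satisfies μ^s_{new} = (I + Δt A^s) μ^s + Δt V μ^f, and the matched fast mean is μ^f_{new} = [δt W + (Δt − δt) C₁ᵀ (Σ₁^s)^{-1} A^s] μ^s + [I + δt A^f + (Δt − δt) C₁ᵀ (Σ₁^s)^{-1} V] μ^f, where Σ₁ = (I + δt A)Σ(I + δt A)ᵀ + δt B Bᵀ with blocks Σ₁^s, C₁, and the covariance after the step equals Σ₁. -/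
open Matrix

/-- One micro–macro acceleration step (one Euler–Maruyama inner step of
size `δt`, linear extrapolation of the slow mean over `Δt`, then Gaussian KL-matching)
applied to a Gaussian law with mean `(μ^s, μ^f)` and covariance `Σ = [[Σ^s, C],[Cᵀ, Σ^f]]`,
for the block drift `A = [[A^s, V],[W, A^f]]`, produces the slow mean
`μ^s_new = (I + Δt A^s) μ^s + Δt V μ^f` and the matched fast mean
`μ^f_new = [δt W + (Δt − δt) C₁ᵀ (Σ₁^s)⁻¹ A^s] μ^s
          + [I + δt A^f + (Δt − δt) C₁ᵀ (Σ₁^s)⁻¹ V] μ^f`,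
where `Σ₁ = (I + δt A) Σ (I + δt A)ᵀ + δt B Bᵀ` (which is also the covariance after the
step) has blocks `Σ₁^s = (Σ₁)₁₁` and `C₁ = (Σ₁)₁₂`. -/
theorem microMacro_one_step_mean
    (ds df m : ℕ)
    (As : Matrix (Fin ds) (Fin ds) ℝ) (V : Matrix (Fin ds) (Fin df) ℝ)
    (W : Matrix (Fin df) (Fin ds) ℝ) (Af : Matrix (Fin df) (Fin df) ℝ)
    (B : Matrix (Fin ds ⊕ Fin df) (Fin m) ℝ)
    (μs : Fin ds → ℝ) (μf : Fin df → ℝ)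
    (Ss : Matrix (Fin ds) (Fin ds) ℝ) (C : Matrix (Fin ds) (Fin df) ℝ)
    (Sf : Matrix (Fin df) (Fin df) ℝ)
    (δt Δt : ℝ) (hδt : 0 < δt) (hΔt : δt ≤ Δt) :
    let A := Matrix.fromBlocks As V W Af
    let M1 := (1 : Matrix (Fin ds ⊕ Fin df) (Fin ds ⊕ Fin df) ℝ) + δt • A
    let S1 := M1 * (Matrix.fromBlocks Ss C Cᵀ Sf) * M1ᵀ + δt • (B * Bᵀ)
    let S1s := S1.toBlocks₁₁
    let C1 := S1.toBlocks₁₂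
    let μ1 := M1.mulVec (Sum.elim μs μf)
    let μ1s := fun i => μ1 (Sum.inl i)
    let μ1f := fun i => μ1 (Sum.inr i)
    let μsnew := μs + (Δt / δt) • (μ1s - μs)
    let μfnew := μ1f + (C1ᵀ * S1s⁻¹).mulVec (μsnew - μ1s)
    IsUnit S1s.det →
    (μsnew = ((1 : Matrix (Fin ds) (Fin ds) ℝ) + Δt • As).mulVec μs
        + Δt • V.mulVec μf) ∧
    (μfnew = (δt • W + (Δt - δt) • (C1ᵀ * S1s⁻¹ * As)).mulVec μs
        + ((1 : Matrix (Fin df) (Fin df) ℝ) + δt • Af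
            + (Δt - δt) • (C1ᵀ * S1s⁻¹ * V)).mulVec μf) := by
  intro A M1 S1 S1s C1 μ1 μ1s μ1f μsnew μfnew _h
  have hδ : δt ≠ 0 := ne_of_gt hδt
  set g : Fin ds → ℝ := As.mulVec μs + V.mulVec μf with hg
  have hμ1s : μ1s = μs + δt • g := by
    funext i
    show μ1 (Sum.inl i) = _
    simp only [μ1, M1, A, Matrix.add_mulVec, Matrix.one_mulVec,
      Matrix.smul_mulVec, Matrix.fromBlocks_mulVec]
    simp [hg, mul_add]
  have hμ1f : μ1f = μf + δt • (W.mulVec μs + Af.mulVec μf) := by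
    funext i
    show μ1 (Sum.inr i) = _
    simp only [μ1, M1, A, Matrix.add_mulVec, Matrix.one_mulVec,
      Matrix.smul_mulVec, Matrix.fromBlocks_mulVec]
    simp [mul_add]
  have hμsnew : μsnew = μs + Δt • g := by
    show μs + (Δt / δt) • (μ1s - μs) = _
    rw [hμ1s]
    rw [add_sub_cancel_left, smul_smul, div_mul_cancel₀ _ hδ]
  have hdiff : μsnew - μ1s = (Δt - δt) • g := by
    rw [hμsnew, hμ1s, sub_smul]
    abel
  constructor
  · rw [hμsnew, hg, Matrix.add_mulVec, Matrix.one_mulVec, Matrix.smul_mulVec,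
      smul_add]
    abel
  · show μ1f + (C1ᵀ * S1s⁻¹).mulVec (μsnew - μ1s) = _
    set K := C1ᵀ * S1s⁻¹ with hK
    clear_value K
    clear_value S1s C1 μsnew μfnew
    rw [hμ1f, hdiff, Matrix.mulVec_smul, hg, Matrix.mulVec_add,
      Matrix.add_mulVec, Matrix.add_mulVec, Matrix.add_mulVec, Matrix.one_mulVec,
      Matrix.smul_mulVec, Matrix.smul_mulVec, Matrix.smul_mulVec,
      Matrix.mulVec_mulVec, Matrix.mulVec_mulVec, smul_add]
    simp only [Matrix.smul_mulVec, smul_add, Matrix.mulVec_add]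
    abel
end

section
/- In the micro–macro acceleration scheme for the linear SDE dX = AX dt + B dW with one inner Euler–Maruyama step of size δt per extrapolation of step Δt, the cumulant generating functions K_n of the laws X_n satisfy the recursion K_n(θ) = K_{n-1}((I + δt Aᵀ)(θ + λ^s_n ⊕ 0^f)) − K_{n-1}((I + δt Aᵀ)(λ^s_n ⊕ 0^f)) + (δt/2)[θᵀBBᵀθ + (λ^s_n ⊕ 0^f)ᵀBBᵀθ + θᵀBBᵀ(λ^s_n ⊕ 0^f)], and if the effective domain of K_{n-1} is all of R^d then so is that of K_n. -/
/-!
The Euler–Maruyama update `M X + B δW` is a linear image of the independent pair `(X, δW)`, so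
its CGF at `c` is `K_{n-1}(Mᵀ c)` plus the Gaussian term `(δt/2) cᵀBBᵀc`. KL-matching with
multiplier `η = λ ⊕ 0` is exponential tilting by `x ↦ η ⬝ᵥ x`, and tilting shifts a CGF:
`K_tilt(θ) = K(θ + η) - K(η)`. Expanding the quadratic form gives the recursion, and since
`K_{n-1}` is finite everywhere, so is every term on the right.
-/

open MeasureTheory ProbabilityTheory Matrix Real
open scoped NNReal

/-- Cumulant generating function of a measure on `ℝ^d`, valued in `(−∞, +∞]`. -/
noncomputable def mcgf {ι : Type*} [Fintype ι] [MeasurableSpace (ι → ℝ)]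
    (μ : Measure (ι → ℝ)) (θ : ι → ℝ) : EReal :=
  ENNReal.log (∫⁻ x, ENNReal.ofReal (Real.exp (θ ⬝ᵥ x)) ∂μ)

lemma tilted_eq_withDensity_exp_sub_log {α : Type*} [MeasurableSpace α] (μ : Measure α)
    {f : α → ℝ} (hf : 0 < ∫ x, rexp (f x) ∂μ) :
    μ.tilted f
      = μ.withDensity fun x => ENNReal.ofReal (rexp (f x - Real.log (∫ x, rexp (f x) ∂μ))) := by
  simp_rw [Measure.tilted, exp_sub, exp_log hf]

section CGF

variable {ι κ : Type*} [Fintype ι] [Fintype κ]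

lemma measurable_ofReal_exp_dotProduct (c : ι → ℝ) :
    Measurable fun x : ι → ℝ => ENNReal.ofReal (rexp (c ⬝ᵥ x)) := by
  fun_prop

lemma measurable_mulVec (M : Matrix ι κ ℝ) : Measurable (M *ᵥ ·) := by
  fun_prop

lemma lintegral_exp_mul_gaussianReal (μ : ℝ) (v : ℝ≥0) (t : ℝ) :
    ∫⁻ x, ENNReal.ofReal (rexp (t * x)) ∂(gaussianReal μ v)
      = ENNReal.ofReal (rexp (μ * t + v * t ^ 2 / 2)) := by
  rw [← ofReal_integral_eq_lintegral_ofReal (integrable_exp_mul_gaussianReal t)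
    (ae_of_all _ fun x => (exp_pos _).le), ← congr_fun mgf_id_gaussianReal t]
  rfl

lemma lintegral_exp_dotProduct_pi_gaussianReal (v : ℝ≥0) (c : κ → ℝ) :
    ∫⁻ w, ENNReal.ofReal (rexp (c ⬝ᵥ w)) ∂(Measure.pi fun _ : κ => gaussianReal 0 v)
      = ENNReal.ofReal (rexp (v / 2 * (c ⬝ᵥ c))) := by
  have hfactor : ∀ w : κ → ℝ,
      ENNReal.ofReal (rexp (c ⬝ᵥ w)) = ∏ i, ENNReal.ofReal (rexp (c i * w i)) := fun w => by
    rw [dotProduct, exp_sum, ENNReal.ofReal_prod_of_nonneg fun i _ => (exp_pos _).le]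
  simp_rw [hfactor]
  have hfactor_meas : ∀ i, Measurable fun x => ENNReal.ofReal (rexp (c i * x)) :=
    fun i => by fun_prop
  rw [lintegral_prod_eq_prod_lintegral_of_indepFun _ _
    (iIndepFun_pi fun i => (hfactor_meas i).aemeasurable) (fun i => by fun_prop)]
  have hcoord : ∀ i, ∫⁻ w, ENNReal.ofReal (rexp (c i * w i))
      ∂(Measure.pi fun _ : κ => gaussianReal 0 v) = ENNReal.ofReal (rexp (v * c i ^ 2 / 2)) :=
    fun i => by
    have h := lintegral_exp_mul_gaussianReal 0 v (c i)
    rw [zero_mul, zero_add] at h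
    rw [← h]
    exact (measurePreserving_eval (fun _ : κ => gaussianReal 0 v) i).lintegral_comp
      (hfactor_meas i)
  simp_rw [hcoord]
  rw [← ENNReal.ofReal_prod_of_nonneg fun i _ => (exp_pos _).le, ← exp_sum, dotProduct,
    Finset.mul_sum]
  exact congrArg _ (congrArg _ (Finset.sum_congr rfl fun i _ => by ring))

lemma mcgf_pi_gaussianReal (v : ℝ≥0) (c : κ → ℝ) :
    mcgf (Measure.pi fun _ : κ => gaussianReal 0 v) c = ((v / 2 * (c ⬝ᵥ c) : ℝ) : EReal) := by
  rw [mcgf, lintegral_exp_dotProduct_pi_gaussianReal,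
    ENNReal.log_ofReal_of_pos (exp_pos _), log_exp]

lemma mcgf_map_mulVec (μ : Measure (κ → ℝ)) (M : Matrix ι κ ℝ) (c : ι → ℝ) :
    mcgf (μ.map (M *ᵥ ·)) c = mcgf μ (Mᵀ *ᵥ c) := by
  rw [mcgf, mcgf, lintegral_map (measurable_ofReal_exp_dotProduct c) (measurable_mulVec M)]
  simp_rw [dotProduct_mulVec, mulVec_transpose]

lemma mcgf_map_add_of_indepFun {Ω : Type*} [MeasurableSpace Ω] {P : Measure Ω}
    {X Y : Ω → ι → ℝ} (hX : Measurable X) (hY : Measurable Y) (hXY : IndepFun X Y P)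
    (c : ι → ℝ) :
    mcgf (P.map fun ω => X ω + Y ω) c = mcgf (P.map X) c + mcgf (P.map Y) c := by
  have hexp := measurable_ofReal_exp_dotProduct c
  have hXY_meas : Measurable fun ω => X ω + Y ω := hX.add hY
  have hprod := lintegral_mul_eq_lintegral_mul_lintegral_of_indepFun''
    (hexp.comp hX).aemeasurable (hexp.comp hY).aemeasurable (hXY.comp hexp hexp)
  simp only [Function.comp_apply] at hprod
  rw [mcgf, mcgf, mcgf, lintegral_map hexp hXY_meas, lintegral_map hexp hX,
    lintegral_map hexp hY, ← ENNReal.log_mul_add, ← hprod]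
  simp_rw [← ENNReal.ofReal_mul (exp_pos _).le, ← exp_add, dotProduct_add]

lemma mcgf_map_mulVec_add_mulVec_gaussian {ν Ω : Type*} [Fintype ν] [MeasurableSpace Ω]
    {P : Measure Ω} {X : Ω → κ → ℝ} {W : Ω → ν → ℝ} (hX : Measurable X) (hW : Measurable W)
    (hXW : IndepFun X W P) {v : ℝ≥0} (hWlaw : P.map W = Measure.pi fun _ => gaussianReal 0 v)
    (M : Matrix ι κ ℝ) (B : Matrix ι ν ℝ) (c : ι → ℝ) :
    mcgf (P.map fun ω => M *ᵥ X ω + B *ᵥ W ω) c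
      = mcgf (P.map X) (Mᵀ *ᵥ c) + ((v / 2 * (c ⬝ᵥ (B * Bᵀ) *ᵥ c) : ℝ) : EReal) := by
  have hM := measurable_mulVec M
  have hB := measurable_mulVec B
  have hMX : P.map (fun ω => M *ᵥ X ω) = (P.map X).map (M *ᵥ ·) :=
    (Measure.map_map hM hX).symm
  have hBW : P.map (fun ω => B *ᵥ W ω) = (P.map W).map (B *ᵥ ·) :=
    (Measure.map_map hB hW).symm
  rw [mcgf_map_add_of_indepFun (X := fun ω => M *ᵥ X ω) (Y := fun ω => B *ᵥ W ω)
      (hM.comp hX) (hB.comp hW) (hXW.comp hM hB),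
    hMX, hBW, mcgf_map_mulVec, mcgf_map_mulVec, hWlaw, mcgf_pi_gaussianReal,
    ← mulVec_mulVec, dotProduct_mulVec c, ← mulVec_transpose]

lemma lintegral_exp_dotProduct_ne_zero (μ : Measure (ι → ℝ)) [NeZero μ] (c : ι → ℝ) :
    ∫⁻ x, ENNReal.ofReal (rexp (c ⬝ᵥ x)) ∂μ ≠ 0 := by
  rw [Ne, lintegral_eq_zero_iff (measurable_ofReal_exp_dotProduct c)]
  intro h
  have hfalse : ∀ᵐ _ ∂μ, False :=
    h.mono fun x hx => (ENNReal.ofReal_pos.2 (exp_pos _)).ne' hx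
  exact NeZero.ne μ (ae_eq_bot.1 (Filter.eventually_false_iff_eq_bot.1 hfalse))

lemma mcgf_ne_bot (μ : Measure (ι → ℝ)) [NeZero μ] (c : ι → ℝ) : mcgf μ c ≠ ⊥ := by
  rw [mcgf, Ne, ENNReal.log_eq_bot_iff]
  exact lintegral_exp_dotProduct_ne_zero μ c

lemma integral_exp_dotProduct_eq_toReal_lintegral (μ : Measure (ι → ℝ)) (c : ι → ℝ) :
    ∫ x, rexp (c ⬝ᵥ x) ∂μ = (∫⁻ x, ENNReal.ofReal (rexp (c ⬝ᵥ x)) ∂μ).toReal :=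
  integral_eq_lintegral_of_nonneg_ae (ae_of_all _ fun _ => (exp_pos _).le)
    (by fun_prop : Measurable fun x : ι → ℝ => rexp (c ⬝ᵥ x)).aestronglyMeasurable

lemma integral_exp_dotProduct_pos (μ : Measure (ι → ℝ)) [NeZero μ] {c : ι → ℝ}
    (hc : mcgf μ c ≠ ⊤) : 0 < ∫ x, rexp (c ⬝ᵥ x) ∂μ := by
  rw [mcgf, Ne, ENNReal.log_eq_top_iff] at hc
  rw [integral_exp_dotProduct_eq_toReal_lintegral]
  exact ENNReal.toReal_pos (lintegral_exp_dotProduct_ne_zero μ c) hc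

lemma mcgf_eq_log_integral (μ : Measure (ι → ℝ)) [NeZero μ] {c : ι → ℝ}
    (hc : mcgf μ c ≠ ⊤) :
    mcgf μ c = (Real.log (∫ x, rexp (c ⬝ᵥ x) ∂μ) : EReal) := by
  have hpos := integral_exp_dotProduct_pos μ hc
  rw [integral_exp_dotProduct_eq_toReal_lintegral] at hpos ⊢
  exact ENNReal.log_pos_real' hpos

lemma mcgf_tilted (μ : Measure (ι → ℝ)) [NeZero μ] {η : ι → ℝ} (hη : mcgf μ η ≠ ⊤)
    (θ : ι → ℝ) : mcgf (μ.tilted (η ⬝ᵥ ·)) θ = mcgf μ (θ + η) - mcgf μ η := by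
  rw [mcgf_eq_log_integral μ hη, mcgf, lintegral_tilted]
  set Z := ∫ x, rexp (η ⬝ᵥ x) ∂μ
  have hZ : 0 < Z := integral_exp_dotProduct_pos μ hη
  have hdensity : ∀ x : ι → ℝ,
      ENNReal.ofReal (rexp (η ⬝ᵥ x) / Z) * ENNReal.ofReal (rexp (θ ⬝ᵥ x))
        = ENNReal.ofReal Z⁻¹ * ENNReal.ofReal (rexp ((θ + η) ⬝ᵥ x)) := fun x => by
    rw [← ENNReal.ofReal_mul (div_nonneg (exp_pos _).le hZ.le),
      ← ENNReal.ofReal_mul (inv_nonneg.2 hZ.le), add_dotProduct, exp_add]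
    ring_nf
  simp_rw [hdensity]
  rw [lintegral_const_mul _ (measurable_ofReal_exp_dotProduct _), ENNReal.log_mul_add,
    ENNReal.log_ofReal_of_pos (inv_pos.2 hZ), log_inv, ← mcgf, EReal.coe_neg, add_comm,
    ← sub_eq_add_neg]

end CGF

theorem microMacro_cgf_recursion_general
    (ds df m : ℕ) {Ω : Type*} [MeasurableSpace Ω] (P : Measure Ω) [IsProbabilityMeasure P]
    (A : Matrix (Fin ds ⊕ Fin df) (Fin ds ⊕ Fin df) ℝ)
    (B : Matrix (Fin ds ⊕ Fin df) (Fin m) ℝ)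
    (δt : ℝ≥0)
    (Xprev : Ω → (Fin ds ⊕ Fin df) → ℝ) (δW : Ω → Fin m → ℝ)
    (hXm : Measurable Xprev) (hWm : Measurable δW)
    (hindep : IndepFun Xprev δW P)
    (hlaw : P.map δW = Measure.pi (fun _ : Fin m => gaussianReal 0 δt))
    -- K_{n-1} has full effective domain
    (hdom : ∀ θ, mcgf (P.map Xprev) θ < ⊤)
    (lam : Fin ds → ℝ) :
    let pad := Sum.elim lam (0 : Fin df → ℝ)
    let M := (1 : Matrix (Fin ds ⊕ Fin df) (Fin ds ⊕ Fin df) ℝ) + (δt : ℝ) • A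
    let Xem := fun ω => M.mulVec (Xprev ω) + B.mulVec (δW ω)
    let Qn := (P.map Xem).withDensity (fun x => ENNReal.ofReal
      (Real.exp (pad ⬝ᵥ x - Real.log (∫ x, Real.exp (pad ⬝ᵥ x) ∂(P.map Xem)))))
    (∀ θ : (Fin ds ⊕ Fin df) → ℝ,
      mcgf Qn θ
        = mcgf (P.map Xprev) (Mᵀ.mulVec (θ + pad))
          - mcgf (P.map Xprev) (Mᵀ.mulVec pad)
          + ((((δt : ℝ) / 2) * (θ ⬝ᵥ (B * Bᵀ).mulVec θ + pad ⬝ᵥ (B * Bᵀ).mulVec θ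
              + θ ⬝ᵥ (B * Bᵀ).mulVec pad) : ℝ) : EReal)) ∧
    (∀ θ : (Fin ds ⊕ Fin df) → ℝ, mcgf Qn θ < ⊤) := by
  intro pad M Xem Qn
  have hXem : Measurable Xem :=
    ((measurable_mulVec M).comp hXm).add ((measurable_mulVec B).comp hWm)
  have : IsProbabilityMeasure (P.map Xem) := Measure.isProbabilityMeasure_map hXem.aemeasurable
  have : IsProbabilityMeasure (P.map Xprev) := Measure.isProbabilityMeasure_map hXm.aemeasurable
  have hstep : ∀ c, mcgf (P.map Xem) c
      = mcgf (P.map Xprev) (Mᵀ *ᵥ c) + (((δt : ℝ) / 2 * (c ⬝ᵥ (B * Bᵀ) *ᵥ c) : ℝ) : EReal) :=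
    mcgf_map_mulVec_add_mulVec_gaussian hXm hWm hindep hlaw M B
  have hK : ∀ c, mcgf (P.map Xprev) c = ((mcgf (P.map Xprev) c).toReal : EReal) :=
    fun c => (EReal.coe_toReal (hdom c).ne (mcgf_ne_bot _ c)).symm
  have hpad : mcgf (P.map Xem) pad ≠ ⊤ := by
    rw [hstep, hK, ← EReal.coe_add]
    exact EReal.coe_ne_top _
  have hQn : Qn = (P.map Xem).tilted (pad ⬝ᵥ ·) :=
    (tilted_eq_withDensity_exp_sub_log _ (integral_exp_dotProduct_pos _ hpad)).symm
  have hquad : ∀ θ, (θ + pad) ⬝ᵥ (B * Bᵀ) *ᵥ (θ + pad)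
      = θ ⬝ᵥ (B * Bᵀ) *ᵥ θ + pad ⬝ᵥ (B * Bᵀ) *ᵥ θ + θ ⬝ᵥ (B * Bᵀ) *ᵥ pad
        + pad ⬝ᵥ (B * Bᵀ) *ᵥ pad := fun θ => by
    rw [mulVec_add, dotProduct_add, add_dotProduct, add_dotProduct]
    ring
  refine ⟨fun θ => ?_, fun θ => ?_⟩ <;>
    rw [hQn, mcgf_tilted _ hpad, hstep, hstep, hK (Mᵀ *ᵥ (θ + pad)), hK (Mᵀ *ᵥ pad)] <;>
    norm_cast
  · rw [hquad]
    ring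
  · exact EReal.coe_lt_top _

/-- In the micro–macro acceleration scheme for `dX = AX dt + B dW` with
one inner Euler–Maruyama step of size `δt` per extrapolation step, if `X_n` is obtained
from `X_{n-1}` by `X^{δt} = (I + δt A) X_{n-1} + B δW` (with `δW ~ N(0, δt I)` independent
of `X_{n-1}`) followed by KL-matching with Lagrange multiplier `λ^s_n`, then the cumulant
generating functions satisfy the recursion
`K_n(θ) = K_{n-1}((I + δt Aᵀ)(θ + λ^s_n ⊕ 0^f)) − K_{n-1}((I + δt Aᵀ)(λ^s_n ⊕ 0^f))
 + (δt/2)[θᵀBBᵀθ + (λ^s_n ⊕ 0^f)ᵀBBᵀθ + θᵀBBᵀ(λ^s_n ⊕ 0^f)]`,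
and the full effective domain propagates from `K_{n-1}` to `K_n`. -/
theorem microMacro_cgf_recursion
    (ds df m : ℕ) {Ω : Type*} [MeasurableSpace Ω] (P : Measure Ω) [IsProbabilityMeasure P]
    (A : Matrix (Fin ds ⊕ Fin df) (Fin ds ⊕ Fin df) ℝ)
    (B : Matrix (Fin ds ⊕ Fin df) (Fin m) ℝ)
    (δt : ℝ≥0) (hδt : 0 < δt)
    (Xprev : Ω → (Fin ds ⊕ Fin df) → ℝ) (δW : Ω → Fin m → ℝ)
    (hXm : Measurable Xprev) (hWm : Measurable δW)
    (hindep : IndepFun Xprev δW P)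
    (hlaw : P.map δW = Measure.pi (fun _ : Fin m => gaussianReal 0 δt))
    -- K_{n-1} has full effective domain
    (hdom : ∀ θ, mcgf (P.map Xprev) θ < ⊤)
    (lam : Fin ds → ℝ) :
    let pad := Sum.elim lam (0 : Fin df → ℝ)
    let M := (1 : Matrix (Fin ds ⊕ Fin df) (Fin ds ⊕ Fin df) ℝ) + (δt : ℝ) • A
    let Xem := fun ω => M.mulVec (Xprev ω) + B.mulVec (δW ω)
    let Qn := (P.map Xem).withDensity (fun x => ENNReal.ofReal
      (Real.exp (pad ⬝ᵥ x - Real.log (∫ x, Real.exp (pad ⬝ᵥ x) ∂(P.map Xem)))))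
    (∀ θ : (Fin ds ⊕ Fin df) → ℝ,
      mcgf Qn θ
        = mcgf (P.map Xprev) (Mᵀ.mulVec (θ + pad))
          - mcgf (P.map Xprev) (Mᵀ.mulVec pad)
          + ((((δt : ℝ) / 2) * (θ ⬝ᵥ (B * Bᵀ).mulVec θ + pad ⬝ᵥ (B * Bᵀ).mulVec θ
              + θ ⬝ᵥ (B * Bᵀ).mulVec pad) : ℝ) : EReal)) ∧
    (∀ θ : (Fin ds ⊕ Fin df) → ℝ, mcgf Qn θ < ⊤) :=
  microMacro_cgf_recursion_general ds df m P A B δt Xprev δW hXm hWm hindep hlaw hdom lam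
end
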